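/- Let L be the finitary first-order language with exactly one binary relation symbol <. Let φ be the L-sentence asserting: if < is a (strict) linear order, then it has no least element or no greatest element. Let T be the L-theory {σ_n : n < ω}, where σ_n asserts: if < is a (strict) linear order, then there are at least n elements. Then: (a) T expresses θ(φ), i.e., for every nonempty L-structure A, A ⊨ T iff some nonempty substructure of A satisfies φ; and (b) no single L-sentence expresses θ(φ). -/

import Mathlib

/-!
In a structure where `<` is not a strict linear order, the structure itself is a substructure
satisfying `φ`; and a substructure of a linear order is again one. A finite nonempty linear order
has both a least and a greatest element, while an infinite one contains, by Ramsey's theorem, a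
strictly ascending or strictly descending sequence, whose range has no greatest, resp. no least
element. So `θ(φ)` holds exactly when "`<` is a linear order" implies "infinite", which is what
`T` says. If a sentence `χ` were equivalent to `T`, compactness would make `χ` a consequence of
finitely many `σ_n`, all of which hold in a large enough finite linear order, which is no
model of `T`.
-/

open FirstOrder Language

namespace SatSub

/-- The language with a single binary relation symbol `<`. -/
def ordL : FirstOrder.Language :=
  ⟨fun _ => Empty, fun n => match n with | 2 => PUnit | _ => Empty⟩

/-- The binary relation symbol `<` of `ordL`. -/
def ltR : ordL.Relations 2 := PUnit.unit

/-- The sentence asserting that `<` is a strict linear order: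
irreflexive, transitive and total (trichotomy). -/
def linOrd : ordL.Sentence :=
  (∀' ∼(ltR.boundedFormula₂ &0 &0)) ⊓
    (∀' ∀' ∀' ((ltR.boundedFormula₂ &0 &1 ⊓ ltR.boundedFormula₂ &1 &2) ⟹
      ltR.boundedFormula₂ &0 &2)) ⊓
    (∀' ∀' (ltR.boundedFormula₂ &0 &1 ⊔ (&0 =' &1) ⊔ ltR.boundedFormula₂ &1 &0))

/-- "There is a least element". -/
def hasLeast : ordL.Sentence :=
  ∃' ∀' (ltR.boundedFormula₂ &0 &1 ⊔ (&0 =' &1))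

/-- "There is a greatest element". -/
def hasGreatest : ordL.Sentence :=
  ∃' ∀' (ltR.boundedFormula₂ &1 &0 ⊔ (&0 =' &1))

/-- φ: if `<` is a strict linear order, then it has no least or no greatest element. -/
def phi : ordL.Sentence := linOrd ⟹ (∼hasLeast ⊔ ∼hasGreatest)

/-- σ_n: if `<` is a strict linear order, then there are at least `n` elements. -/
def sigma (n : ℕ) : ordL.Sentence := linOrd ⟹ Sentence.cardGe ordL n

/-- The theory T = {σ_n : n < ω}. -/
def T : ordL.Theory := Set.range sigma

open Structure Cardinal Substructure Function

section Order

variable {α : Type*} (r : α → α → Prop)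

theorem exists_least_of_finite [Finite α] [Nonempty α] [IsStrictTotalOrder α r] :
    ∃ x, ∀ y, r x y ∨ x = y := by
  obtain ⟨x, -, hmin⟩ :=
    (Finite.wellFounded_of_trans_of_irrefl r).has_min Set.univ Set.univ_nonempty
  exact ⟨x, fun y => (or_assoc.2 (trichotomous x y)).resolve_right (hmin y trivial)⟩

theorem exists_ascending_or_descending_seq_of_infinite [Infinite α] [IsStrictTotalOrder α r] :
    ∃ f : ℕ → α, (∀ n, r (f n) (f (n + 1))) ∨ ∀ n, r (f (n + 1)) (f n) := by
  set e := Infinite.natEmbedding α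
  obtain ⟨g, hinc | hnoninc⟩ := exists_increasing_or_nonincreasing_subseq' r e
  · exact ⟨_, .inl hinc⟩
  · refine ⟨e ∘ g, .inr fun n => ?_⟩
    have hne : e (g n) ≠ e (g (n + 1)) := e.injective.ne (g.injective.ne n.succ_ne_self.symm)
    exact ((trichotomous (r := r) _ _).resolve_left
      (hnoninc n (n + 1) n.lt_succ_self)).resolve_left hne

variable {r} in
theorem not_exists_greatest_mem_range_of_ascending [IsStrictOrder α r] {f : ℕ → α}
    (hf : ∀ n, r (f n) (f (n + 1))) :
    ¬∃ x ∈ Set.range f, ∀ y ∈ Set.range f, r y x ∨ x = y := by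
  rintro ⟨_, ⟨n, rfl⟩, hmax⟩
  rcases hmax (f (n + 1)) ⟨n + 1, rfl⟩ with h | h
  · exact asymm (hf n) h
  · exact irrefl _ (h ▸ hf n)

theorem exists_nonempty_no_least_or_no_greatest_of_infinite [Infinite α]
    [IsStrictTotalOrder α r] :
    ∃ s : Set α, s.Nonempty ∧
      ((¬∃ x ∈ s, ∀ y ∈ s, r x y ∨ x = y) ∨ ¬∃ x ∈ s, ∀ y ∈ s, r y x ∨ x = y) := by
  obtain ⟨f, hinc | hdec⟩ := exists_ascending_or_descending_seq_of_infinite r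
  · exact ⟨_, Set.range_nonempty f, .inr (not_exists_greatest_mem_range_of_ascending hinc)⟩
  · exact ⟨_, Set.range_nonempty f,
      .inl (not_exists_greatest_mem_range_of_ascending (r := swap r) hdec)⟩

end Order

instance : ordL.IsRelational := fun _ => inferInstanceAs (IsEmpty Empty)

section Realize

variable {M : Type*} [ordL.Structure M]

def lt (a b : M) : Prop := RelMap ltR ![a, b]

theorem realize_linOrd : M ⊨ linOrd ↔ IsStrictTotalOrder M lt := by
  have h : M ⊨ linOrd ↔ ((∀ a : M, ¬lt a a) ∧ ∀ a b c : M, lt a b → lt b c → lt a c) ∧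
      ∀ a b : M, lt a b ∨ a = b ∨ lt b a := by
    simp [linOrd, lt, Sentence.Realize, Formula.Realize, Fin.snoc, or_assoc]
  rw [h]
  constructor
  · rintro ⟨⟨hirr, htrans⟩, htri⟩
    exact { irrefl := hirr, trans := htrans,
            trichotomous := fun a b hab hba => ((htri a b).resolve_left hab).resolve_right hba }
  · intro _
    exact ⟨⟨irrefl, fun _ _ _ => _root_.trans⟩, trichotomous⟩

theorem realize_hasLeast : M ⊨ hasLeast ↔ ∃ x : M, ∀ y, lt x y ∨ x = y := by
  simp [hasLeast, lt, Sentence.Realize, Formula.Realize, Fin.snoc]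

theorem realize_hasGreatest : M ⊨ hasGreatest ↔ ∃ x : M, ∀ y, lt y x ∨ x = y := by
  simp [hasGreatest, lt, Sentence.Realize, Formula.Realize, Fin.snoc]

theorem realize_phi :
    M ⊨ phi ↔ (IsStrictTotalOrder M lt → ¬M ⊨ hasLeast ∨ ¬M ⊨ hasGreatest) := by
  simp only [phi, Sentence.realize_imp, Sentence.realize_sup, Sentence.realize_not, realize_linOrd]

theorem realize_sigma {n : ℕ} : M ⊨ sigma n ↔ (IsStrictTotalOrder M lt → n ≤ #M) := by
  simp only [sigma, Sentence.realize_imp, realize_linOrd, Sentence.realize_cardGe]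

theorem model_T_iff : M ⊨ T ↔ (IsStrictTotalOrder M lt → Infinite M) := by
  simp only [T, Theory.model_iff, Set.forall_mem_range, realize_sigma, ← imp_forall_iff,
    infinite_iff, aleph0_le]

theorem lt_coe {S : ordL.Substructure M} {a b : S} : lt a b ↔ lt (a : M) b := by
  have h : (fun i => ((![a, b] i : S) : M)) = ![(a : M), b] :=
    funext fun i => by fin_cases i <;> rfl
  exact Iff.of_eq (congrArg (RelMap ltR) h)

instance [IsStrictTotalOrder M lt] (S : ordL.Substructure M) : IsStrictTotalOrder S lt :=
  (⟨⟨Subtype.val, Subtype.val_injective⟩, lt_coe.symm⟩ :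
    (lt : S → S → Prop) ↪r lt).isStrictTotalOrder

theorem realize_hasLeast_closure (s : Set M) :
    closure ordL s ⊨ hasLeast ↔ ∃ x ∈ s, ∀ y ∈ s, lt x y ∨ x = y := by
  rw [realize_hasLeast]
  simp only [Subtype.exists, Subtype.forall, lt_coe, Subtype.ext_iff,
    mem_closure_iff_of_isRelational, exists_prop]

theorem realize_hasGreatest_closure (s : Set M) :
    closure ordL s ⊨ hasGreatest ↔ ∃ x ∈ s, ∀ y ∈ s, lt y x ∨ x = y := by
  rw [realize_hasGreatest]
  simp only [Subtype.exists, Subtype.forall, lt_coe, Subtype.ext_iff,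
    mem_closure_iff_of_isRelational, exists_prop]

theorem infinite_of_realize_phi [Nonempty M] [IsStrictTotalOrder M lt] (h : M ⊨ phi) :
    Infinite M := by
  by_contra hfin
  rw [not_infinite_iff_finite] at hfin
  rcases realize_phi.1 h ‹_› with hleast | hgreatest
  · exact hleast (realize_hasLeast.2 (exists_least_of_finite lt))
  · exact hgreatest (realize_hasGreatest.2 (exists_least_of_finite (swap lt)))

theorem exists_substructure_realize_phi_of_infinite [Infinite M] [IsStrictTotalOrder M lt] :
    ∃ S : ordL.Substructure M, Nonempty S ∧ S ⊨ phi := by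
  obtain ⟨s, ⟨x, hx⟩, hs⟩ :=
    exists_nonempty_no_least_or_no_greatest_of_infinite (lt : M → M → Prop)
  refine ⟨closure ordL s, ⟨⟨x, subset_closure hx⟩⟩, realize_phi.2 fun _ => ?_⟩
  rwa [realize_hasLeast_closure, realize_hasGreatest_closure]

theorem realize_phi_top_of_not_isStrictTotalOrder (h : ¬IsStrictTotalOrder M lt) :
    (⊤ : ordL.Substructure M) ⊨ phi := by
  rw [realize_phi, ← realize_linOrd, StrongHomClass.realize_sentence topEquiv, realize_linOrd]
  exact fun hlin => (h hlin).elim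

theorem model_T_iff_exists_substructure_realize_phi [Nonempty M] :
    M ⊨ T ↔ ∃ S : ordL.Substructure M, Nonempty S ∧ S ⊨ phi := by
  rw [model_T_iff]
  constructor
  · intro hinf
    by_cases hlin : IsStrictTotalOrder M lt
    · have := hinf hlin
      exact exists_substructure_realize_phi_of_infinite
    · exact ⟨⊤, ⟨⟨Classical.arbitrary M, mem_top _⟩⟩,
        realize_phi_top_of_not_isStrictTotalOrder hlin⟩
  · rintro ⟨S, _, hphi⟩ hlin
    have := infinite_of_realize_phi hphi
    exact Infinite.of_injective ((↑) : S → M) Subtype.val_injective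

end Realize

abbrev structureOfRel {α : Type*} (r : α → α → Prop) : ordL.Structure α where
  RelMap {n} _ x := match n, x with
    | 2, x => r (x 0) (x 1)
    | _, _ => False

theorem not_exists_sentence_iff_model_T :
    ¬∃ χ : ordL.Sentence, ∀ (M : Type) [ordL.Structure M] [Nonempty M], M ⊨ χ ↔ M ⊨ T := by
  rintro ⟨χ, hχ⟩
  obtain ⟨T₀, hT₀, hT₀χ⟩ :=
    Theory.models_iff_finset_models.1 (Theory.models_sentence_iff.2 fun M => (hχ M).2 M.is_model)
  obtain ⟨N, hN⟩ : ∃ N, ∀ ψ ∈ T₀, ∃ n ≤ N, sigma n = ψ := by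
    have hT₀ : ∀ ψ ∈ T₀, ∃ n, sigma n = ψ := fun ψ hψ => hT₀ hψ
    choose! n hn using hT₀
    exact ⟨T₀.sup n, fun ψ hψ => ⟨n ψ, Finset.le_sup hψ, hn ψ hψ⟩⟩
  let _ := structureOfRel (α := Fin (N + 1)) (· < ·)
  have hlin : IsStrictTotalOrder (Fin (N + 1)) lt :=
    inferInstanceAs (IsStrictTotalOrder (Fin (N + 1)) (· < ·))
  have : Fin (N + 1) ⊨ (T₀ : ordL.Theory) := by
    refine ⟨fun ψ hψ => ?_⟩
    obtain ⟨n, hnN, rfl⟩ := hN ψ hψ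
    rw [realize_sigma, mk_fin]
    exact fun _ => by exact_mod_cast hnN.trans N.le_succ
  exact not_infinite_iff_finite.2 inferInstance
    (model_T_iff.1 ((hχ _).1 (hT₀χ.realize_sentence (Fin (N + 1)))) hlin)

theorem theory_expresses_theta_but_no_sentence_does :
    (∀ (M : Type) [ordL.Structure M] [Nonempty M],
        M ⊨ T ↔ ∃ S : ordL.Substructure M, Nonempty S ∧ S ⊨ phi) ∧
      ¬ ∃ χ : ordL.Sentence,
        ∀ (M : Type) [ordL.Structure M] [Nonempty M],
          M ⊨ χ ↔ ∃ S : ordL.Substructure M, Nonempty S ∧ S ⊨ phi := by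
  refine ⟨fun M _ _ => model_T_iff_exists_substructure_realize_phi, ?_⟩
  rintro ⟨χ, hχ⟩
  exact not_exists_sentence_iff_model_T
    ⟨χ, fun M _ _ => (hχ M).trans model_T_iff_exists_substructure_realize_phi.symm⟩

end SatSub
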